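/- arXiv:2103.05032 — 9 statements merged into one kernel-verified Lean document; each statement's English description precedes it below -/
import Mathlib

section
/- Let A be a real symmetric d×d matrix, c, x ∈ ℝ^d, α ≥ 0, γ ≥ 0, and let θ_1,…,θ_K be nonnegative reals. Define sequences y_1 = x and, for 1 ≤ k ≤ K, v_k = A(y_k − c) + α(y_k − x) and y_{k+1} = y_k − γ v_k. Then Σ_{k=1}^{K} θ_k v_k = Q(A; α, γ, θ) · A (x − c), where Q(A; α, γ, θ) := Σ_{k=1}^{K} θ_k (I − γ(A + αI))^{k−1}. (In particular, the expected output of the proximal local-SGD client update on the quadratic client loss f_i(x) = (1/2)‖A^{1/2}(x − c)‖² equals the gradient of the surrogate loss f̃_i(x) = (1/2)‖(Q A)^{1/2}(x − c)‖².) -/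
open Matrix Finset

/-- The distortion matrix `Q(A; α, γ, θ) = Σ_{k=1}^K θ_k (I - γ(A + αI))^(k-1)`. -/
noncomputable def distortion {d : ℕ} (K : ℕ) (A : Matrix (Fin d) (Fin d) ℝ)
    (α γ : ℝ) (θ : ℕ → ℝ) : Matrix (Fin d) (Fin d) ℝ :=
  ∑ k ∈ Finset.Icc 1 K,
    θ k • ((1 : Matrix (Fin d) (Fin d) ℝ) - γ • (A + α • 1)) ^ (k - 1)

lemma sum_mulVec' {d : ℕ} (s : Finset ℕ) (f : ℕ → Matrix (Fin d) (Fin d) ℝ)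
    (w : Fin d → ℝ) : (∑ k ∈ s, f k).mulVec w = ∑ k ∈ s, (f k).mulVec w := by
  induction s using Finset.cons_induction with
  | empty => simp
  | cons a s ha ih => simp [Finset.sum_insert ha, Matrix.add_mulVec, ih]

/-- The expected output of the proximal local-SGD client update on a
quadratic client loss equals `Q(A; α, γ, θ) A (x - c)`. -/
theorem stmt_1 (d K : ℕ) (A : Matrix (Fin d) (Fin d) ℝ) (hA : A.IsSymm)
    (c x : Fin d → ℝ) (α γ : ℝ) (hα : 0 ≤ α) (hγ : 0 ≤ γ)
    (θ : ℕ → ℝ) (hθ : ∀ k, 0 ≤ θ k)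
    (y v : ℕ → Fin d → ℝ) (hy1 : y 1 = x)
    (hv : ∀ k, 1 ≤ k → k ≤ K → v k = A.mulVec (y k - c) + α • (y k - x))
    (hy : ∀ k, 1 ≤ k → k ≤ K → y (k + 1) = y k - γ • v k) :
    ∑ k ∈ Finset.Icc 1 K, θ k • v k =
      (distortion K A α γ θ * A).mulVec (x - c) := by
  set M : Matrix (Fin d) (Fin d) ℝ := (1 : Matrix (Fin d) (Fin d) ℝ) - γ • (A + α • 1) with hM
  have key : ∀ k, 1 ≤ k → k ≤ K → v k = (M ^ (k - 1)).mulVec (A.mulVec (x - c)) := by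
    intro k
    induction k with
    | zero => intro h; omega
    | succ n ih =>
      intro h1 h2
      rcases Nat.eq_or_lt_of_le h1 with h1' | h1'
      · -- n + 1 = 1, i.e. n = 0
        have hn : n = 0 := by omega
        subst hn
        simp only [Nat.add_sub_cancel, pow_zero, Matrix.one_mulVec]
        rw [hv 1 le_rfl (by omega), hy1, sub_self, smul_zero, add_zero]
      · -- n ≥ 1
        have hn1 : 1 ≤ n := by omega
        have hnK : n ≤ K := by omega
        have ihn := ih hn1 hnK
        have hvn1 : v (n + 1) = v n - γ • (A.mulVec (v n) + α • v n) := by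
          rw [hv (n + 1) (by omega) h2, hy n hn1 hnK]
          have h3 : A.mulVec (y n - γ • v n - c) = A.mulVec (y n - c) - γ • A.mulVec (v n) := by
            rw [show y n - γ • v n - c = (y n - c) - γ • v n by abel]
            rw [Matrix.mulVec_sub, Matrix.mulVec_smul]
          rw [h3, hv n hn1 hnK]
          module
        have hMmul : ∀ w : Fin d → ℝ, M.mulVec w = w - γ • (A.mulVec w + α • w) := by
          intro w
          rw [hM]
          simp [Matrix.sub_mulVec, Matrix.add_mulVec, Matrix.smul_mulVec,
            Matrix.one_mulVec]
        have : v (n + 1) = M.mulVec (v n) := by rw [hMmul, hvn1]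
        rw [this, ihn, Matrix.mulVec_mulVec]
        congr 1
        conv_rhs => rw [show n + 1 - 1 = (n - 1) + 1 by omega]
        rw [pow_succ']
  have hdist : (distortion K A α γ θ * A).mulVec (x - c)
      = ∑ k ∈ Finset.Icc 1 K, θ k • (M ^ (k - 1)).mulVec (A.mulVec (x - c)) := by
    rw [distortion, Finset.sum_mul, sum_mulVec' _ _ _]
    refine Finset.sum_congr rfl fun k hk => ?_
    rw [smul_mul_assoc, Matrix.smul_mulVec, Matrix.mulVec_mulVec]
  rw [hdist]
  refine Finset.sum_congr rfl fun k hk => ?_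
  simp only [Finset.mem_Icc] at hk
  rw [key k hk.1 hk.2]
end

section
/- Let A be a real symmetric d×d matrix, c ∈ ℝ^d, γ ∈ ℝ, and K ≥ 1 an integer. Define the gradient-descent step map F : ℝ^d → ℝ^d by F(x) = x − γ A(x − c), let F^{[K]} denote its K-fold composition, and define m : ℝ^d → ℝ by m(x) = (1/2)⟨F^{[K]}(x) − c, A(F^{[K]}(x) − c)⟩. Then m is differentiable and its gradient satisfies ∇m(x) = (I − γA)^{2K} A (x − c) for every x ∈ ℝ^d. (Thus the MAML meta-gradient with K exact gradient-descent inner steps on a quadratic loss equals the gradient of the surrogate loss corresponding to the weights Θ_{2K+1}, i.e., θ_{2K+1} = 1 and all other θ_k = 0.) -/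
open Matrix
open scoped RealInnerProductSpace

/-!
The step map `F` is affine with fixed point `c` and linear part `B = I - γA`, so
`F^[K] x - c = B^K (x - c)`. Since `B` is self-adjoint and commutes with `A`, this turns `m` into
the quadratic form `m x = ½ ⟪x - c, B^(2K) A (x - c)⟫` of the self-adjoint operator `B^(2K) A`,
whose gradient at `x` is `B^(2K) A (x - c)`.
-/

section
variable {E : Type*} [NormedAddCommGroup E] [InnerProductSpace ℝ E]

theorem iterate_sub_eq_pow_apply {F : E → E} {T : E →L[ℝ] E} {c : E}
    (hF : ∀ x, F x - c = T (x - c)) (n : ℕ) (x : E) : F^[n] x - c = (T ^ n) (x - c) := by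
  induction n with
  | zero => simp
  | succ n ih => rw [Function.iterate_succ_apply', hF, ih, pow_succ', mul_apply_eq_comp]

variable [CompleteSpace E]

theorem inner_pow_apply_apply_pow_apply {T S : E →L[ℝ] E} (hT : IsSelfAdjoint T)
    (hTS : Commute T S) (n : ℕ) (v : E) :
    ⟪(T ^ n) v, S ((T ^ n) v)⟫ = ⟪v, (T ^ (2 * n) * S) v⟫ :=
  calc ⟪(T ^ n) v, S ((T ^ n) v)⟫ = ⟪v, (T ^ n * S * T ^ n) v⟫ := (hT.pow n).isSymmetric _ _
    _ = ⟪v, (T ^ (2 * n) * S) v⟫ := by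
      rw [mul_assoc, ← (hTS.pow_left n).eq, ← mul_assoc, ← pow_add, two_mul]

theorem hasGradientAt_half_inner_sub_apply_sub {T : E →L[ℝ] E} (hT : IsSelfAdjoint T)
    (c x : E) : HasGradientAt (fun y => (1 / 2 : ℝ) * ⟪y - c, T (y - c)⟫) (T (x - c)) x := by
  rw [hasGradientAt_iff_hasFDerivAt]
  have hsub : HasFDerivAt (fun y : E => y - c) (ContinuousLinearMap.id ℝ E) x :=
    (hasFDerivAt_id x).sub_const c
  refine ((hsub.inner ℝ (T.hasFDerivAt.comp x hsub)).const_mul (1 / 2 : ℝ)).congr_fderiv ?_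
  ext h
  have hsymm : ⟪x - c, T h⟫ = ⟪T (x - c), h⟫ := (hT.isSymmetric _ _).symm
  simp only [_root_.smul_apply, ContinuousLinearMap.comp_apply, ContinuousLinearMap.prod_apply,
    ContinuousLinearMap.id_apply, fderivInnerCLM_apply, smul_eq_mul, Function.comp_apply,
    InnerProductSpace.toDual_apply_apply]
  rw [hsymm, real_inner_comm h]
  ring

end

theorem stmt_2_general (d : ℕ) (A : Matrix (Fin d) (Fin d) ℝ) (hA : A.IsSymm)
    (c : EuclideanSpace ℝ (Fin d)) (γ : ℝ) (K : ℕ)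
    (F : EuclideanSpace ℝ (Fin d) → EuclideanSpace ℝ (Fin d))
    (hF : ∀ x, F x = x - γ • Matrix.toEuclideanLin A (x - c))
    (m : EuclideanSpace ℝ (Fin d) → ℝ)
    (hm : ∀ x, m x = (1 / 2) * ⟪F^[K] x - c, Matrix.toEuclideanLin A (F^[K] x - c)⟫) :
    Differentiable ℝ m ∧
      ∀ x, gradient m x =
        Matrix.toEuclideanLin
          (((1 : Matrix (Fin d) (Fin d) ℝ) - γ • A) ^ (2 * K) * A) (x - c) := by
  set T := Matrix.toEuclideanCLM (n := Fin d) (𝕜 := ℝ)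
  have hAsa : IsSelfAdjoint (T A) := IsSelfAdjoint.map (isHermitian_iff_isSymm.mpr hA) T
  have hBsa : IsSelfAdjoint (T (1 - γ • A)) :=
    IsSelfAdjoint.map (isHermitian_iff_isSymm.mpr (isSymm_one.sub (hA.smul γ))) T
  have hBA : Commute (T (1 - γ • A)) (T A) :=
    ((Commute.one_left A).sub_left ((Commute.refl A).smul_left γ)).map T
  have hFB : ∀ x, F x - c = T (1 - γ • A) (x - c) := fun x => by
    rw [hF]
    change x - γ • T A (x - c) - c = _
    rw [show T (1 - γ • A) = 1 - γ • T A by rw [map_sub, map_one, map_smul], _root_.sub_apply,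
      one_apply_eq_self, _root_.smul_apply]
    abel
  have hM : T ((1 - γ • A) ^ (2 * K) * A) = T (1 - γ • A) ^ (2 * K) * T A := by
    rw [map_mul, map_pow]
  have hMsa : IsSelfAdjoint (T ((1 - γ • A) ^ (2 * K) * A)) := by
    rw [hM, ← (hBsa.pow _).commute_iff hAsa]
    exact hBA.pow_left _
  have hm' : m = fun y => (1 / 2 : ℝ) * ⟪y - c, T ((1 - γ • A) ^ (2 * K) * A) (y - c)⟫ := by
    funext y
    rw [hm, iterate_sub_eq_pow_apply hFB, hM]
    exact congrArg _ (inner_pow_apply_apply_pow_apply hBsa hBA _ _)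
  have hgrad : ∀ x, HasGradientAt m (T ((1 - γ • A) ^ (2 * K) * A) (x - c)) x := fun x =>
    hm' ▸ hasGradientAt_half_inner_sub_apply_sub hMsa c x
  exact ⟨fun x => (hgrad x).differentiableAt, fun x => (hgrad x).gradient⟩

/-- The MAML meta-gradient with `K` exact gradient-descent inner steps on a
quadratic loss: with `F x = x - γ A (x - c)` and
`m x = (1/2) ⟪F^[K] x - c, A (F^[K] x - c)⟫`, the function `m` is differentiable and
`∇ m x = (I - γA)^(2K) A (x - c)`. -/
theorem stmt_2 (d : ℕ) (A : Matrix (Fin d) (Fin d) ℝ) (hA : A.IsSymm)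
    (c : EuclideanSpace ℝ (Fin d)) (γ : ℝ) (K : ℕ) (hK : 1 ≤ K)
    (F : EuclideanSpace ℝ (Fin d) → EuclideanSpace ℝ (Fin d))
    (hF : ∀ x, F x = x - γ • Matrix.toEuclideanLin A (x - c))
    (m : EuclideanSpace ℝ (Fin d) → ℝ)
    (hm : ∀ x, m x = (1 / 2) * ⟪F^[K] x - c, Matrix.toEuclideanLin A (F^[K] x - c)⟫) :
    Differentiable ℝ m ∧
      ∀ x, gradient m x =
        Matrix.toEuclideanLin
          (((1 : Matrix (Fin d) (Fin d) ℝ) - γ • A) ^ (2 * K) * A) (x - c) :=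
  stmt_2_general d A hA c γ K F hF m hm
end

section
/- Let A be a real symmetric d×d matrix with μI ⪯ A ⪯ LI for some 0 < μ ≤ L, let α ≥ 0, let θ_1,…,θ_K be nonnegative reals not all zero, and suppose 0 ≤ γ < 1/(L + α). Then the distortion matrix Q(A; α, γ, θ) := Σ_{k=1}^{K} θ_k (I − γ(A + αI))^{k−1} is symmetric positive definite, and the product Q(A; α, γ, θ) · A is symmetric positive definite (so the surrogate loss x ↦ (1/2)⟨x − c, Q(A; α, γ, θ) A (x − c)⟩ is a strongly convex quadratic). -/
/-!
`Q` and `Q A` are the polynomials `p(A)` and `p(A) A` in `A`, where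
`p(x) = Σ θ_k (1 - γ(x + α))^(k-1)`. By the functional calculus, a polynomial in a
Hermitian matrix is positive definite as soon as it is positive on the spectrum. The spectrum
of `A` lies in `[μ, L]`, where `1 - γ(x + α) ≥ 1 - γ(L + α) > 0`; hence `p(x) > 0` and
`p(x) x > 0` there.
-/

open Matrix Finset

open Polynomial
open scoped MatrixOrder ComplexOrder

namespace Matrix

variable {𝕜 n : Type*} [RCLike 𝕜] [Fintype n] [DecidableEq n]

lemma spectrum_subset_Icc_of_posSemidef {A : Matrix n n 𝕜} (hA : A.IsHermitian) {μ L : ℝ}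
    (hAlow : (A - μ • (1 : Matrix n n 𝕜)).PosSemidef)
    (hAup : (L • (1 : Matrix n n 𝕜) - A).PosSemidef) :
    spectrum ℝ A ⊆ Set.Icc μ L := fun x hx =>
  ⟨(algebraMap_le_iff_le_spectrum hA).mp (by rwa [Algebra.algebraMap_eq_smul_one]) x hx,
    (le_algebraMap_iff_spectrum_le hA).mp (by rwa [Algebra.algebraMap_eq_smul_one]) x hx⟩

lemma posDef_aeval_of_eval_pos {A : Matrix n n 𝕜} (hA : A.IsHermitian) (p : ℝ[X])
    (hp : ∀ x ∈ spectrum ℝ A, 0 < p.eval x) : (aeval A p).PosDef := by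
  rw [← cfc_polynomial p A hA, ← isStrictlyPositive_iff_posDef,
    cfc_isStrictlyPositive_iff _ A (A.finite_real_spectrum.continuousOn _) hA]
  exact hp

end Matrix

noncomputable def distortionPolynomial (K : ℕ) (α γ : ℝ) (θ : ℕ → ℝ) : ℝ[X] :=
  ∑ k ∈ Icc 1 K, C (θ k) * (1 - C γ * (X + C α)) ^ (k - 1)

lemma aeval_distortionPolynomial {d : ℕ} (K : ℕ) (A : Matrix (Fin d) (Fin d) ℝ) (α γ : ℝ)
    (θ : ℕ → ℝ) : aeval A (distortionPolynomial K α γ θ) = distortion K A α γ θ := by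
  simp only [distortionPolynomial, distortion, map_sum, map_mul, map_pow, map_sub, map_one,
    map_add, aeval_C, aeval_X]
  simp [Algebra.algebraMap_eq_smul_one]

lemma eval_distortionPolynomial_pos {K : ℕ} {L α γ x : ℝ} {θ : ℕ → ℝ} (hγ0 : 0 ≤ γ)
    (hγ : γ < 1 / (L + α)) (hx : x ≤ L) (hθ : ∀ k, 0 ≤ θ k)
    (hθne : ∃ k ∈ Icc 1 K, θ k ≠ 0) : 0 < (distortionPolynomial K α γ θ).eval x := by
  have hLα : 0 < L + α := one_div_pos.mp (hγ0.trans_lt hγ)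
  have hbase : 0 < 1 - γ * (x + α) := by
    have hmono : γ * (x + α) ≤ γ * (L + α) := by gcongr
    have hstep : γ * (L + α) < 1 := (lt_div_iff₀ hLα).mp hγ
    linarith
  obtain ⟨k, hk, hθk⟩ := hθne
  simp only [distortionPolynomial, eval_finsetSum, eval_mul, eval_pow, eval_sub, eval_one,
    eval_C, eval_add, eval_X]
  exact sum_pos' (fun j _ => mul_nonneg (hθ j) (pow_nonneg hbase.le _))
    ⟨k, hk, mul_pos ((hθ k).lt_of_ne' hθk) (pow_pos hbase _)⟩

theorem stmt_3_general (d K : ℕ) (A : Matrix (Fin d) (Fin d) ℝ) (hA : A.IsSymm)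
    (μ L : ℝ) (hμ : 0 < μ)
    (hAlow : (A - μ • (1 : Matrix (Fin d) (Fin d) ℝ)).PosSemidef)
    (hAup : (L • (1 : Matrix (Fin d) (Fin d) ℝ) - A).PosSemidef)
    (α γ : ℝ) (hγ0 : 0 ≤ γ) (hγ : γ < 1 / (L + α))
    (θ : ℕ → ℝ) (hθ : ∀ k, 0 ≤ θ k)
    (hθne : ∃ k ∈ Finset.Icc 1 K, θ k ≠ 0) :
    (distortion K A α γ θ).PosDef ∧ (distortion K A α γ θ * A).PosDef := by
  have hH : A.IsHermitian := isHermitian_iff_isSymm.mpr hA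
  have hspec := spectrum_subset_Icc_of_posSemidef hH hAlow hAup
  have hP (x) (hx : x ∈ spectrum ℝ A) : 0 < (distortionPolynomial K α γ θ).eval x :=
    eval_distortionPolynomial_pos hγ0 hγ (hspec hx).2 hθ hθne
  have hQA : aeval A (distortionPolynomial K α γ θ * X) = distortion K A α γ θ * A := by
    rw [map_mul, aeval_X, aeval_distortionPolynomial]
  rw [← hQA, ← aeval_distortionPolynomial]
  refine ⟨posDef_aeval_of_eval_pos hH _ hP, posDef_aeval_of_eval_pos hH _ fun x hx => ?_⟩
  rw [eval_mul, eval_X]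
  exact mul_pos (hP x hx) (hμ.trans_le (hspec hx).1)

/-- If `μI ⪯ A ⪯ LI` with `0 < μ ≤ L`, `α ≥ 0`, the weights `θ_1,…,θ_K`
are nonnegative and not all zero, and `0 ≤ γ < 1/(L + α)`, then the distortion matrix
`Q(A; α, γ, θ)` is (symmetric) positive definite and so is `Q(A; α, γ, θ) * A`. -/
theorem stmt_3 (d K : ℕ) (A : Matrix (Fin d) (Fin d) ℝ) (hA : A.IsSymm)
    (μ L : ℝ) (hμ : 0 < μ) (hμL : μ ≤ L)
    (hAlow : (A - μ • (1 : Matrix (Fin d) (Fin d) ℝ)).PosSemidef)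
    (hAup : (L • (1 : Matrix (Fin d) (Fin d) ℝ) - A).PosSemidef)
    (α γ : ℝ) (hα : 0 ≤ α) (hγ0 : 0 ≤ γ) (hγ : γ < 1 / (L + α))
    (θ : ℕ → ℝ) (hθ : ∀ k, 0 ≤ θ k)
    (hθne : ∃ k ∈ Finset.Icc 1 K, θ k ≠ 0) :
    (distortion K A α γ θ).PosDef ∧ (distortion K A α γ θ * A).PosDef :=
  stmt_3_general d K A hA μ L hμ hAlow hAup α γ hγ0 hγ θ hθ hθne
end

section
/- Let A be a real symmetric d×d matrix with μI ⪯ A ⪯ LI for some 0 < μ ≤ L, let α ≥ 0, K ≥ 1, and suppose 0 ≤ γ < 1/(L + α). Let Q := Σ_{k=1}^{K} (I − γ(A + αI))^{k−1} (the distortion matrix with FedAvg weights θ_1 = ⋯ = θ_K = 1). Then φ(μ, α, γ, K) · I ⪯ Q A ⪯ φ(L, α, γ, K) · I, where φ(λ, α, γ, K) := Σ_{k=1}^{K} (1 − γ(λ + α))^{k−1} λ. In particular every eigenvalue χ of QA satisfies φ(μ, α, γ, K) ≤ χ ≤ φ(L, α, γ, K), so the surrogate loss for FedAvg-style updates is φ(L,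 α, γ, K)-smooth and φ(μ, α, γ, K)-strongly convex with condition number at most φ(L, α, γ, K)/φ(μ, α, γ, K). -/
/-!
Since `Q` is a polynomial in `A`, `Q A = φ(A)` in the continuous functional calculus, where
`φ = φ(·, α, γ, K)`. For `0 < γ(λ + α) ≤ 1` the geometric sum gives
`φ(λ) = (1 - α / (λ + α)) · (1 - (1 - γ(λ + α))^K) / γ`, a product of two nonnegative factors
increasing in `λ`, so `φ` is monotone on `[μ, L] ⊇ spectrum A`. The Loewner bounds and the bounds
on the spectrum of `φ(A)` then both follow from the spectral mapping theorem.
-/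

open Matrix Finset

/-- `φ(λ, α, γ, K) = Σ_{k=1}^K (1 - γ(λ + α))^(k-1) λ`. -/
noncomputable def phi (lam α γ : ℝ) (K : ℕ) : ℝ :=
  ∑ k ∈ Finset.Icc 1 K, (1 - γ * (lam + α)) ^ (k - 1) * lam

open Polynomial Set

lemma phi_eq_div {lam α γ : ℝ} (K : ℕ) (hγ : γ ≠ 0) (hlam : lam + α ≠ 0) :
    phi lam α γ K = (1 - α / (lam + α)) * ((1 - (1 - γ * (lam + α)) ^ K) / γ) := by
  have hgeom := geom_sum_mul (1 - γ * (lam + α)) K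
  rw [phi, ← Finset.sum_mul, ← Finset.Ico_add_one_right_eq_Icc, sum_Ico_eq_sum_range]
  simp only [add_tsub_cancel_right, add_tsub_cancel_left]
  field_simp
  linear_combination (-lam) * hgeom

@[fun_prop]
lemma continuous_phi (α γ : ℝ) (K : ℕ) : Continuous fun lam ↦ phi lam α γ K := by
  unfold phi
  fun_prop

lemma phi_le_phi {x y α γ : ℝ} (K : ℕ) (hα : 0 ≤ α) (hγ : 0 ≤ γ) (hx : 0 < x) (hxy : x ≤ y)
    (hy : γ * (y + α) ≤ 1) : phi x α γ K ≤ phi y α γ K := by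
  rcases hγ.eq_or_lt with rfl | hγ
  · simpa [phi] using mul_le_mul_of_nonneg_left hxy (Nat.cast_nonneg K)
  have hrx : 0 ≤ 1 - γ * (x + α) := by nlinarith
  have hrx' : 1 - γ * (x + α) ≤ 1 := by nlinarith
  have hry : 0 ≤ 1 - γ * (y + α) := by linarith
  have hyα : 0 < y + α := by linarith
  rw [phi_eq_div K hγ.ne' (by linarith), phi_eq_div K hγ.ne' hyα.ne']
  gcongr
  · exact div_nonneg (sub_nonneg.2 (pow_le_one₀ hrx hrx')) hγ.le
  · exact sub_nonneg.2 ((div_le_one hyα).2 (by linarith))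

section FunctionalCalculus

variable {A : Type*} [Ring A] [StarRing A] [TopologicalSpace A] [Algebra ℝ A]
  [ContinuousFunctionalCalculus ℝ A IsSelfAdjoint]

lemma sum_pow_mul_eq_cfc_phi {a : A} (ha : IsSelfAdjoint a) (α γ : ℝ) (K : ℕ) :
    (∑ k ∈ Finset.Icc 1 K, (1 - γ • (a + α • 1)) ^ (k - 1)) * a = cfc (phi · α γ K) a := by
  let q : ℝ[X] := ∑ k ∈ Finset.Icc 1 K, (1 - C γ * (X + C α)) ^ (k - 1) * X
  have hq : q.eval = (phi · α γ K) := by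
    ext x
    simp [q, phi, eval_finsetSum]
  rw [← hq, cfc_polynomial q a]
  simp [q, Finset.sum_mul, Algebra.smul_def]

variable [PartialOrder A] [StarOrderedRing A] [NonnegSpectrumClass ℝ A]

lemma spectrum_subset_Icc_of_le {a : A} (ha : IsSelfAdjoint a) {μ L : ℝ}
    (hμ : algebraMap ℝ A μ ≤ a) (hL : a ≤ algebraMap ℝ A L) : spectrum ℝ a ⊆ Icc μ L :=
  fun x hx ↦ ⟨(algebraMap_le_iff_le_spectrum ha).1 hμ x hx,
    (le_algebraMap_iff_spectrum_le ha).1 hL x hx⟩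

end FunctionalCalculus

open scoped MatrixOrder

theorem stmt_7_general (d : ℕ) (A : Matrix (Fin d) (Fin d) ℝ) (hA : A.IsSymm)
    (μ L : ℝ) (hμ : 0 < μ)
    (hAlow : (A - μ • (1 : Matrix (Fin d) (Fin d) ℝ)).PosSemidef)
    (hAup : (L • (1 : Matrix (Fin d) (Fin d) ℝ) - A).PosSemidef)
    (α γ : ℝ) (hα : 0 ≤ α) (K : ℕ)
    (hγ0 : 0 ≤ γ) (hγ : γ < 1 / (L + α))
    (Q : Matrix (Fin d) (Fin d) ℝ)
    (hQ : Q = ∑ k ∈ Finset.Icc 1 K,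
      ((1 : Matrix (Fin d) (Fin d) ℝ) - γ • (A + α • 1)) ^ (k - 1)) :
    (Q * A - phi μ α γ K • (1 : Matrix (Fin d) (Fin d) ℝ)).PosSemidef ∧
    (phi L α γ K • (1 : Matrix (Fin d) (Fin d) ℝ) - Q * A).PosSemidef ∧
    ∀ χ ∈ spectrum ℝ (Q * A), phi μ α γ K ≤ χ ∧ χ ≤ phi L α γ K := by
  have hA' : IsSelfAdjoint A := (isHermitian_iff_isSymm.2 hA).isSelfAdjoint
  have hspec : spectrum ℝ A ⊆ Icc μ L := spectrum_subset_Icc_of_le hA'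
    (by rwa [Algebra.algebraMap_eq_smul_one, le_iff])
    (by rwa [Algebra.algebraMap_eq_smul_one, le_iff])
  have hγL : γ * (L + α) ≤ 1 := by
    have hLα : 0 < L + α := one_div_pos.1 (hγ0.trans_lt hγ)
    rw [lt_div_iff₀ hLα] at hγ
    linarith
  have hφ : ∀ x ∈ spectrum ℝ A, phi μ α γ K ≤ phi x α γ K ∧ phi x α γ K ≤ phi L α γ K :=
    fun x hx ↦ ⟨phi_le_phi K hα hγ0 hμ (hspec hx).1 (by nlinarith [(hspec hx).2]),
      phi_le_phi K hα hγ0 (hμ.trans_le (hspec hx).1) (hspec hx).2 hγL⟩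
  rw [hQ, sum_pow_mul_eq_cfc_phi hA', cfc_map_spectrum (phi · α γ K) A]
  refine ⟨?_, ?_, ?_⟩
  · rw [← le_iff, ← Algebra.algebraMap_eq_smul_one]
    exact algebraMap_le_cfc _ _ A fun x hx ↦ (hφ x hx).1
  · rw [← le_iff, ← Algebra.algebraMap_eq_smul_one]
    exact cfc_le_algebraMap _ _ A fun x hx ↦ (hφ x hx).2
  · rintro _ ⟨x, hx, rfl⟩
    exact hφ x hx

/-- FedAvg weights: with `Q = Σ_{k=1}^K (I - γ(A + αI))^(k-1)`,
`φ(μ) I ⪯ Q A ⪯ φ(L) I`; in particular every (real) eigenvalue `χ` of `QA` satisfies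
`φ(μ, α, γ, K) ≤ χ ≤ φ(L, α, γ, K)`. -/
theorem stmt_7 (d : ℕ) (A : Matrix (Fin d) (Fin d) ℝ) (hA : A.IsSymm)
    (μ L : ℝ) (hμ : 0 < μ) (hμL : μ ≤ L)
    (hAlow : (A - μ • (1 : Matrix (Fin d) (Fin d) ℝ)).PosSemidef)
    (hAup : (L • (1 : Matrix (Fin d) (Fin d) ℝ) - A).PosSemidef)
    (α γ : ℝ) (hα : 0 ≤ α) (K : ℕ) (hK : 1 ≤ K)
    (hγ0 : 0 ≤ γ) (hγ : γ < 1 / (L + α))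
    (Q : Matrix (Fin d) (Fin d) ℝ)
    (hQ : Q = ∑ k ∈ Finset.Icc 1 K,
      ((1 : Matrix (Fin d) (Fin d) ℝ) - γ • (A + α • 1)) ^ (k - 1)) :
    (Q * A - phi μ α γ K • (1 : Matrix (Fin d) (Fin d) ℝ)).PosSemidef ∧
    (phi L α γ K • (1 : Matrix (Fin d) (Fin d) ℝ) - Q * A).PosSemidef ∧
    ∀ χ ∈ spectrum ℝ (Q * A), phi μ α γ K ≤ χ ∧ χ ≤ phi L α γ K :=
  stmt_7_general d A hA μ L hμ hAlow hAup α γ hα K hγ0 hγ Q hQ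
end

section
/- Let A be a real symmetric d×d matrix with μI ⪯ A ⪯ LI for some 0 < μ ≤ L, let α ≥ 0, K ≥ 1, and suppose 0 ≤ γ < 1/(K·L + α). Let Q := (I − γ(A + αI))^{K−1} (the distortion matrix with MAML-style weights θ_K = 1 and θ_k = 0 for k < K). Then ψ(μ, α, γ, K) · I ⪯ Q A ⪯ ψ(L, α, γ, K) · I, where ψ(λ, α, γ, K) := (1 − γ(λ + α))^{K−1} λ. In particular every eigenvalue χ of QA satisfies ψ(μ, α, γ, K) ≤ χ ≤ ψ(L, α, γ, K), and the ratio ψ(L, α, γ, K)/ψ(μ, α, γ, K) equals ((1 − γ(L + α))/(1 − γ(μ + α)))^{K−1} · (L/μ). -/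
/-!
In the continuous functional calculus `Q A = ψ(A)`, where `ψ(t) = (1 - γ(t + α))^(K-1) t`, so the
Loewner and the spectral bounds both reduce to `ψ(μ) ≤ ψ(x) ≤ ψ(L)` for `x ∈ spec A ⊆ [μ, L]`,
i.e. to monotonicity of `ψ` on `[0, L]`. For `a ≤ b`, Bernoulli's inequality gives
`(1 - γ(b + α))^(K-1) ≥ (1 - γ(a + α))^(K-1) (1 - (K-1)γ(b - a)/(1 - γ(a + α)))`, and the step
size condition `γ(KL + α) < 1` guarantees `(K-1)γb ≤ 1 - γ(a + α)`, which is exactly what makes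
`b` times the last factor at least `a`.
-/

open Matrix Finset

noncomputable def psi (lam α γ : ℝ) (K : ℕ) : ℝ :=
  (1 - γ * (lam + α)) ^ (K - 1) * lam

open scoped MatrixOrder

lemma monotoneOn_sub_mul_pow_mul {c γ L : ℝ} (n : ℕ) (hγ : 0 ≤ γ)
    (hc : γ * ((n + 1) * L) < c) :
    MonotoneOn (fun t => (c - γ * t) ^ n * t) (Set.Icc 0 L) := by
  rintro a ⟨-, -⟩ b ⟨hb, hbL⟩ hab
  have hγnb : 0 ≤ γ * (n * b) := by positivity
  have hγab : γ * a ≤ γ * b := mul_le_mul_of_nonneg_left hab hγ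
  have hγbL : γ * (n * b + b) ≤ γ * ((n + 1) * L) :=
    mul_le_mul_of_nonneg_left (by nlinarith [n.cast_nonneg (α := ℝ)]) hγ
  have hta : 0 < c - γ * a := by linarith
  have htb : 0 ≤ c - γ * b := by linarith
  obtain ⟨x, hx⟩ : ∃ x, x = -(γ * (b - a)) / (c - γ * a) := ⟨_, rfl⟩
  have hratio : 1 + x = (c - γ * b) / (c - γ * a) := by rw [hx]; field_simp; ring
  have hbernoulli : 1 + n * x ≤ (1 + x) ^ n :=
    one_add_mul_le_pow (by have := div_nonneg htb hta.le; linarith) n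
  have hlinear : a ≤ (1 + n * x) * b := by
    have : (1 + n * x) * b - a = (b - a) * (c - γ * a - γ * (n * b)) / (c - γ * a) := by
      rw [hx]; field_simp; ring
    rw [← sub_nonneg, this]
    exact div_nonneg (mul_nonneg (by linarith) (by linarith)) hta.le
  calc (c - γ * a) ^ n * a ≤ (c - γ * a) ^ n * ((1 + n * x) * b) := by gcongr
    _ ≤ (c - γ * a) ^ n * ((1 + x) ^ n * b) := by gcongr
    _ = (c - γ * b) ^ n * b := by rw [hratio, div_pow]; field_simp

lemma psi_monotoneOn {α γ L : ℝ} {K : ℕ} (hK : 1 ≤ K) (hγ : 0 ≤ γ)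
    (hγKL : γ * (K * L + α) < 1) :
    MonotoneOn (fun t => psi t α γ K) (Set.Icc 0 L) := by
  have hc : γ * (((K - 1 : ℕ) + 1) * L) < 1 - γ * α := by
    rw [Nat.cast_sub hK, Nat.cast_one, sub_add_cancel]
    linarith
  convert monotoneOn_sub_mul_pow_mul (K - 1) hγ hc using 2 with t
  simp only [psi]
  ring

lemma continuous_psi (α γ : ℝ) (K : ℕ) : Continuous (fun t => psi t α γ K) := by
  unfold psi
  fun_prop

lemma psi_div_psi (μ L α γ : ℝ) (K : ℕ) :
    psi L α γ K / psi μ α γ K =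
      ((1 - γ * (L + α)) / (1 - γ * (μ + α))) ^ (K - 1) * (L / μ) := by
  rw [psi, psi, mul_div_mul_comm, ← div_pow]

section FunctionalCalculus

variable {𝒜 : Type*} [TopologicalSpace 𝒜] [Ring 𝒜] [StarRing 𝒜] [Algebra ℝ 𝒜]
  [ContinuousFunctionalCalculus ℝ 𝒜 IsSelfAdjoint]

lemma cfc_psi {a : 𝒜} (ha : IsSelfAdjoint a) (α γ : ℝ) (K : ℕ) :
    cfc (fun t => psi t α γ K) a = (1 - γ • (a + α • 1)) ^ (K - 1) * a := by
  unfold psi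
  rw [cfc_mul (fun t => (1 - γ * (t + α)) ^ (K - 1)) (fun t => t) a,
    cfc_pow (fun t => 1 - γ * (t + α)) (K - 1) a, cfc_sub (fun _ => 1) (fun t => γ * (t + α)) a,
    cfc_const_one ℝ a, cfc_const_mul γ (fun t => t + α) a, cfc_add_const α (fun t => t) a,
    cfc_id' ℝ a, Algebra.algebraMap_eq_smul_one]

variable [PartialOrder 𝒜] [StarOrderedRing 𝒜] [NonnegSpectrumClass ℝ 𝒜]

lemma psi_mem_Icc_of_mem_spectrum {a : 𝒜} (ha : IsSelfAdjoint a) {μ L α γ : ℝ} {K : ℕ}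
    (hμ : 0 ≤ μ) (hlow : algebraMap ℝ 𝒜 μ ≤ a) (hup : a ≤ algebraMap ℝ 𝒜 L)
    (hK : 1 ≤ K) (hγ : 0 ≤ γ) (hγKL : γ * (K * L + α) < 1) {x : ℝ} (hx : x ∈ spectrum ℝ a) :
    psi x α γ K ∈ Set.Icc (psi μ α γ K) (psi L α γ K) := by
  have hμx : μ ≤ x := (algebraMap_le_iff_le_spectrum ha).mp hlow x hx
  have hxL : x ≤ L := (le_algebraMap_iff_spectrum_le ha).mp hup x hx
  have hμ' : μ ∈ Set.Icc 0 L := ⟨hμ, hμx.trans hxL⟩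
  have hx' : x ∈ Set.Icc 0 L := ⟨hμ.trans hμx, hxL⟩
  have hL : L ∈ Set.Icc 0 L := ⟨hx'.1.trans hxL, le_rfl⟩
  have hmono := psi_monotoneOn hK hγ hγKL
  exact ⟨hmono hμ' hx' hμx, hmono hx' hL hxL⟩

end FunctionalCalculus

theorem stmt_8_general (d : ℕ) (A : Matrix (Fin d) (Fin d) ℝ) (hA : A.IsSymm)
    (μ L : ℝ) (hμ : 0 < μ)
    (hAlow : (A - μ • (1 : Matrix (Fin d) (Fin d) ℝ)).PosSemidef)
    (hAup : (L • (1 : Matrix (Fin d) (Fin d) ℝ) - A).PosSemidef)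
    (α γ : ℝ) (K : ℕ) (hK : 1 ≤ K)
    (hγ0 : 0 ≤ γ) (hγ : γ < 1 / (K * L + α))
    (Q : Matrix (Fin d) (Fin d) ℝ)
    (hQ : Q = ((1 : Matrix (Fin d) (Fin d) ℝ) - γ • (A + α • 1)) ^ (K - 1)) :
    (Q * A - psi μ α γ K • (1 : Matrix (Fin d) (Fin d) ℝ)).PosSemidef ∧
    (psi L α γ K • (1 : Matrix (Fin d) (Fin d) ℝ) - Q * A).PosSemidef ∧
    (∀ χ ∈ spectrum ℝ (Q * A), psi μ α γ K ≤ χ ∧ χ ≤ psi L α γ K) ∧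
    psi L α γ K / psi μ α γ K =
      ((1 - γ * (L + α)) / (1 - γ * (μ + α))) ^ (K - 1) * (L / μ) := by
  have hsa : IsSelfAdjoint A := (isHermitian_iff_isSymm.mpr hA).isSelfAdjoint
  -- `0 ≤ γ < 1 / (KL + α)` forces `KL + α > 0`, also in view of the junk value `1 / 0 = 0`.
  have hγKL : γ * (K * L + α) < 1 :=
    (lt_div_iff₀ (one_div_pos.mp (hγ0.trans_lt hγ))).mp hγ
  have hbounds : ∀ x ∈ spectrum ℝ A, psi x α γ K ∈ Set.Icc (psi μ α γ K) (psi L α γ K) :=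
    fun x hx => psi_mem_Icc_of_mem_spectrum hsa hμ.le
      (by rwa [Algebra.algebraMap_eq_smul_one, Matrix.le_iff])
      (by rwa [Algebra.algebraMap_eq_smul_one, Matrix.le_iff]) hK hγ0 hγKL hx
  have hQA : Q * A = cfc (fun t => psi t α γ K) A := by rw [hQ, cfc_psi hsa]
  have hcont := (continuous_psi α γ K).continuousOn (s := spectrum ℝ A)
  simp only [← Algebra.algebraMap_eq_smul_one, ← Matrix.le_iff, hQA]
  refine ⟨algebraMap_le_cfc _ _ A (fun x hx => (hbounds x hx).1) hcont,
    cfc_le_algebraMap _ _ A (fun x hx => (hbounds x hx).2) hcont, ?_, psi_div_psi μ L α γ K⟩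
  rw [cfc_map_spectrum _ A hsa hcont]
  rintro _ ⟨x, hx, rfl⟩
  exact hbounds x hx

/-- MAML-style weights: with `Q = (I - γ(A + αI))^(K-1)` and
`0 ≤ γ < 1/(KL + α)`, `ψ(μ) I ⪯ Q A ⪯ ψ(L) I`; in particular every (real) eigenvalue `χ`
of `QA` satisfies `ψ(μ) ≤ χ ≤ ψ(L)`, and
`ψ(L)/ψ(μ) = ((1 - γ(L + α))/(1 - γ(μ + α)))^(K-1) (L/μ)`. -/
theorem stmt_8 (d : ℕ) (A : Matrix (Fin d) (Fin d) ℝ) (hA : A.IsSymm)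
    (μ L : ℝ) (hμ : 0 < μ) (hμL : μ ≤ L)
    (hAlow : (A - μ • (1 : Matrix (Fin d) (Fin d) ℝ)).PosSemidef)
    (hAup : (L • (1 : Matrix (Fin d) (Fin d) ℝ) - A).PosSemidef)
    (α γ : ℝ) (hα : 0 ≤ α) (K : ℕ) (hK : 1 ≤ K)
    (hγ0 : 0 ≤ γ) (hγ : γ < 1 / (K * L + α))
    (Q : Matrix (Fin d) (Fin d) ℝ)
    (hQ : Q = ((1 : Matrix (Fin d) (Fin d) ℝ) - γ • (A + α • 1)) ^ (K - 1)) :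
    (Q * A - psi μ α γ K • (1 : Matrix (Fin d) (Fin d) ℝ)).PosSemidef ∧
    (psi L α γ K • (1 : Matrix (Fin d) (Fin d) ℝ) - Q * A).PosSemidef ∧
    (∀ χ ∈ spectrum ℝ (Q * A), psi μ α γ K ≤ χ ∧ χ ≤ psi L α γ K) ∧
    psi L α γ K / psi μ α γ K =
      ((1 - γ * (L + α)) / (1 - γ * (μ + α))) ^ (K - 1) * (L / μ) :=
  stmt_8_general d A hA μ L hμ hAlow hAup α γ K hK hγ0 hγ Q hQ
end

section
/- Let a < b be reals, let x_1, …, x_n ∈ [a, b], and let p_1, …, p_n ≥ 0 with Σ p_i = 1; write m := Σ_{i=1}^n p_i x_i for the mean. Then the mean absolute deviation satisfies Σ_{i=1}^n p_i |x_i − m| ≤ 2(b − m)(m − a)/(b − a). Moreover, equality holds if and only if for every i with p_i > 0 one has x_i ∈ {a, b}. -/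
open Finset

/-!
Write `u x = (x - a)(b - m)` and `v x = (b - x)(m - a)`. Their difference is `(x - m)(b - a)` and
each has weighted mean `(b - m)(m - a)`, so `(b - a)|x - m| = u + v - 2 min u v` averages to
`2(b - m)(m - a) - 2 E[min u v]`. For `x, m ∈ [a, b]` the correction term is nonnegative, and it
vanishes exactly when `min u v = 0` wherever `p > 0`, i.e. when `x ∈ {a, b}` or `m ∈ {a, b}`;
a mean at an endpoint forces all the mass onto that endpoint.
-/

section WeightedMean

variable {R ι : Type*} [Ring R] {s : Finset ι} {p x : ι → R} {m : R}

lemma sum_mul_sub_const (hp1 : ∑ i ∈ s, p i = 1) (hm : ∑ i ∈ s, p i * x i = m) (c : R) :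
    ∑ i ∈ s, p i * (x i - c) = m - c := by
  simp only [mul_sub, sum_sub_distrib, ← sum_mul, hp1, hm, one_mul]

lemma sum_mul_const_sub (hp1 : ∑ i ∈ s, p i = 1) (hm : ∑ i ∈ s, p i * x i = m) (c : R) :
    ∑ i ∈ s, p i * (c - x i) = c - m := by
  simp only [mul_sub, sum_sub_distrib, ← sum_mul, hp1, hm, one_mul]

variable [LinearOrder R]

lemma weightedMean_mem_Icc [IsOrderedRing R] (hp : ∀ i ∈ s, 0 ≤ p i)
    (hp1 : ∑ i ∈ s, p i = 1) (hm : ∑ i ∈ s, p i * x i = m) {a b : R}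
    (hx : ∀ i ∈ s, x i ∈ Set.Icc a b) : m ∈ Set.Icc a b := by
  have hlo : 0 ≤ ∑ i ∈ s, p i * (x i - a) :=
    sum_nonneg fun i hi => mul_nonneg (hp i hi) (sub_nonneg.2 (hx i hi).1)
  have hhi : 0 ≤ ∑ i ∈ s, p i * (b - x i) :=
    sum_nonneg fun i hi => mul_nonneg (hp i hi) (sub_nonneg.2 (hx i hi).2)
  rw [sum_mul_sub_const hp1 hm] at hlo
  rw [sum_mul_const_sub hp1 hm] at hhi
  exact ⟨sub_nonneg.1 hlo, sub_nonneg.1 hhi⟩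

lemma eq_of_weightedMean_eq_of_le [IsStrictOrderedRing R] (hp : ∀ i ∈ s, 0 ≤ p i)
    (hp1 : ∑ i ∈ s, p i = 1) (hm : ∑ i ∈ s, p i * x i = m) (hx : ∀ i ∈ s, m ≤ x i)
    {i : ι} (hi : i ∈ s) (hpi : 0 < p i) : x i = m := by
  have hzero : ∑ j ∈ s, p j * (x j - m) = 0 := by rw [sum_mul_sub_const hp1 hm, sub_self]
  have hterm := (sum_eq_zero_iff_of_nonneg fun j hj => mul_nonneg (hp j hj)
    (sub_nonneg.2 (hx j hj))).1 hzero i hi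
  exact sub_eq_zero.1 ((mul_eq_zero.1 hterm).resolve_left hpi.ne')

lemma eq_of_weightedMean_eq_of_ge [IsStrictOrderedRing R] (hp : ∀ i ∈ s, 0 ≤ p i)
    (hp1 : ∑ i ∈ s, p i = 1) (hm : ∑ i ∈ s, p i * x i = m) (hx : ∀ i ∈ s, x i ≤ m)
    {i : ι} (hi : i ∈ s) (hpi : 0 < p i) : x i = m := by
  have hzero : ∑ j ∈ s, p j * (m - x j) = 0 := by rw [sum_mul_const_sub hp1 hm, sub_self]
  have hterm := (sum_eq_zero_iff_of_nonneg fun j hj => mul_nonneg (hp j hj)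
    (sub_nonneg.2 (hx j hj))).1 hzero i hi
  exact (sub_eq_zero.1 ((mul_eq_zero.1 hterm).resolve_left hpi.ne')).symm

end WeightedMean

section MeanAbsoluteDeviation

variable {𝕜 ι : Type*} [CommRing 𝕜] [LinearOrder 𝕜] [IsStrictOrderedRing 𝕜]

lemma abs_sub_mul_eq_sub_two_mul_min {a b : 𝕜} (hab : a ≤ b) (x m : 𝕜) :
    |x - m| * (b - a) = (x - a) * (b - m) + (b - x) * (m - a)
      - 2 * min ((x - a) * (b - m)) ((b - x) * (m - a)) := by
  have hdiff : (x - a) * (b - m) - (b - x) * (m - a) = (x - m) * (b - a) := by ring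
  rw [← abs_of_nonneg (sub_nonneg.2 hab), ← abs_mul, ← hdiff, ← max_sub_min_eq_abs']
  linarith [min_add_max ((x - a) * (b - m)) ((b - x) * (m - a))]

variable {s : Finset ι} {p x : ι → 𝕜} {a b m : 𝕜}

lemma sum_mul_abs_sub_mul_eq (hab : a ≤ b) (hp1 : ∑ i ∈ s, p i = 1)
    (hm : ∑ i ∈ s, p i * x i = m) :
    (∑ i ∈ s, p i * |x i - m|) * (b - a) = 2 * (b - m) * (m - a)
      - 2 * ∑ i ∈ s, p i * min ((x i - a) * (b - m)) ((b - x i) * (m - a)) := by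
  have hu : ∑ i ∈ s, p i * ((x i - a) * (b - m)) = (m - a) * (b - m) := by
    simp only [← mul_assoc, ← sum_mul, sum_mul_sub_const hp1 hm]
  have hv : ∑ i ∈ s, p i * ((b - x i) * (m - a)) = (b - m) * (m - a) := by
    simp only [← mul_assoc, ← sum_mul, sum_mul_const_sub hp1 hm]
  calc (∑ i ∈ s, p i * |x i - m|) * (b - a)
      = ∑ i ∈ s, (p i * ((x i - a) * (b - m)) + p i * ((b - x i) * (m - a))
          - 2 * (p i * min ((x i - a) * (b - m)) ((b - x i) * (m - a)))) := by
        rw [sum_mul]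
        exact sum_congr rfl fun i _ => by
          rw [mul_assoc, abs_sub_mul_eq_sub_two_mul_min hab]; ring
    _ = _ := by rw [sum_sub_distrib, sum_add_distrib, hu, hv, ← mul_sum]; ring

lemma zero_le_min_mul_sub {a b x m : 𝕜} (hx : x ∈ Set.Icc a b) (hm : m ∈ Set.Icc a b) :
    0 ≤ min ((x - a) * (b - m)) ((b - x) * (m - a)) :=
  le_min (mul_nonneg (sub_nonneg.2 hx.1) (sub_nonneg.2 hm.2))
    (mul_nonneg (sub_nonneg.2 hx.2) (sub_nonneg.2 hm.1))

lemma sum_mul_min_eq_zero_iff (hp : ∀ i ∈ s, 0 ≤ p i) (hp1 : ∑ i ∈ s, p i = 1)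
    (hm : ∑ i ∈ s, p i * x i = m) (hx : ∀ i ∈ s, x i ∈ Set.Icc a b) :
    ∑ i ∈ s, p i * min ((x i - a) * (b - m)) ((b - x i) * (m - a)) = 0 ↔
      ∀ i ∈ s, 0 < p i → x i = a ∨ x i = b := by
  have hmab := weightedMean_mem_Icc hp hp1 hm hx
  rw [sum_eq_zero_iff_of_nonneg fun i hi =>
    mul_nonneg (hp i hi) (zero_le_min_mul_sub (hx i hi) hmab)]
  refine forall₂_congr fun i hi => ⟨fun h hpi => ?_, fun h => ?_⟩
  · have hmin := (mul_eq_zero.1 h).resolve_left hpi.ne'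
    rcases min_choice ((x i - a) * (b - m)) ((b - x i) * (m - a)) with hc | hc <;>
      rw [hc] at hmin <;> rcases mul_eq_zero.1 hmin with hxe | hme
    · exact .inl (sub_eq_zero.1 hxe)
    · obtain rfl : b = m := sub_eq_zero.1 hme
      exact .inr (eq_of_weightedMean_eq_of_ge hp hp1 hm (fun j hj => (hx j hj).2) hi hpi)
    · exact .inr (sub_eq_zero.1 hxe).symm
    · obtain rfl : m = a := sub_eq_zero.1 hme
      exact .inl (eq_of_weightedMean_eq_of_le hp hp1 hm (fun j hj => (hx j hj).1) hi hpi)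
  · rcases (hp i hi).eq_or_lt with hp0 | hpos
    · rw [← hp0, zero_mul]
    refine mul_eq_zero_of_right _ (le_antisymm ?_ (zero_le_min_mul_sub (hx i hi) hmab))
    rcases h hpos with hxa | hxb
    · exact min_le_of_left_le (by rw [hxa, sub_self, zero_mul])
    · exact min_le_of_right_le (by rw [hxb, sub_self, zero_mul])

end MeanAbsoluteDeviation

/-- Bhatia–Davis-type inequality for the mean absolute deviation: if
`x_i ∈ [a, b]` and `p` is a probability vector with mean `m = Σ p_i x_i`, then
`Σ p_i |x_i − m| ≤ 2(b − m)(m − a)/(b − a)`, with equality iff every outcome with positive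
probability lies in `{a, b}`. -/
theorem stmt_10 (n : ℕ) (a b : ℝ) (hab : a < b)
    (x : Fin n → ℝ) (hx : ∀ i, x i ∈ Set.Icc a b)
    (p : Fin n → ℝ) (hp : ∀ i, 0 ≤ p i) (hp1 : ∑ i, p i = 1)
    (m : ℝ) (hm : m = ∑ i, p i * x i) :
    (∑ i, p i * |x i - m| ≤ 2 * (b - m) * (m - a) / (b - a)) ∧
    ((∑ i, p i * |x i - m| = 2 * (b - m) * (m - a) / (b - a)) ↔
      ∀ i, 0 < p i → x i = a ∨ x i = b) := by
  have hp' : ∀ i ∈ univ, 0 ≤ p i := fun i _ => hp i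
  have hx' : ∀ i ∈ univ, x i ∈ Set.Icc a b := fun i _ => hx i
  have hba : 0 < b - a := sub_pos.2 hab
  have hmad := sum_mul_abs_sub_mul_eq hab.le hp1 hm.symm
  have hgap : 0 ≤ ∑ i, p i * min ((x i - a) * (b - m)) ((b - x i) * (m - a)) :=
    sum_nonneg fun i _ =>
      mul_nonneg (hp i) (zero_le_min_mul_sub (hx i) (weightedMean_mem_Icc hp' hp1 hm.symm hx'))
  refine ⟨by rw [le_div_iff₀ hba, hmad]; linarith, ?_⟩
  rw [eq_div_iff hba.ne', hmad, sub_eq_self, mul_eq_zero, or_iff_right two_ne_zero,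
    sum_mul_min_eq_zero_iff hp' hp1 hm.symm hx']
  simp only [mem_univ, true_implies]
end

section
/- Let a < b be reals, let x_1, …, x_n ∈ [a, b], and let p_1, …, p_n ≥ 0 with Σ p_i = 1; write m := Σ_{i=1}^n p_i x_i. Then Σ_{i=1}^n p_i |x_i − m| ≤ (b − a)/2, with equality if and only if Σ_{i : x_i = a} p_i = 1/2 and Σ_{i : x_i = b} p_i = 1/2 (i.e., the distribution takes the values a and b each with probability 1/2). -/
open Finset

/-- Popoviciu-type inequality for the mean absolute deviation: if
`x_i ∈ [a, b]` and `p` is a probability vector with mean `m = Σ p_i x_i`, then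
`Σ p_i |x_i − m| ≤ (b − a)/2`, with equality iff the values `a` and `b` are each taken
with total probability `1/2`. -/
theorem stmt_11 (n : ℕ) (a b : ℝ) (hab : a < b)
    (x : Fin n → ℝ) (hx : ∀ i, x i ∈ Set.Icc a b)
    (p : Fin n → ℝ) (hp : ∀ i, 0 ≤ p i) (hp1 : ∑ i, p i = 1)
    (m : ℝ) (hm : m = ∑ i, p i * x i) :
    (∑ i, p i * |x i - m| ≤ (b - a) / 2) ∧
    ((∑ i, p i * |x i - m| = (b - a) / 2) ↔
      ((∑ i, if x i = a then p i else 0) = 1 / 2 ∧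
       (∑ i, if x i = b then p i else 0) = 1 / 2)) := by
  have hba : (0:ℝ) < b - a := sub_pos.mpr hab
  have hma : a ≤ m := by
    rw [hm]
    calc a = ∑ i, p i * a := by rw [← Finset.sum_mul, hp1, one_mul]
    _ ≤ ∑ i, p i * x i :=
      Finset.sum_le_sum fun i _ => mul_le_mul_of_nonneg_left (hx i).1 (hp i)
  have hmb : m ≤ b := by
    rw [hm]
    calc ∑ i, p i * x i ≤ ∑ i, p i * b :=
      Finset.sum_le_sum fun i _ => mul_le_mul_of_nonneg_left (hx i).2 (hp i)
    _ = b := by rw [← Finset.sum_mul, hp1, one_mul]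
  have hsum0 : ∑ i, p i * (x i - m) = 0 := by
    simp only [mul_sub]
    rw [Finset.sum_sub_distrib, ← hm, ← Finset.sum_mul, hp1, one_mul, sub_self]
  have habs : ∀ t : ℝ, |t| = 2 * max t 0 - t := by
    intro t
    rcases le_total t 0 with h | h
    · rw [abs_of_nonpos h, max_eq_right h]; ring
    · rw [abs_of_nonneg h, max_eq_left h]; ring
  have hS : ∑ i, p i * |x i - m| = 2 * ∑ i, p i * max (x i - m) 0 := by
    have hcg : ∀ i ∈ Finset.univ (α := Fin n), p i * |x i - m|
        = 2 * (p i * max (x i - m) 0) - p i * (x i - m) := by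
      intro i _; rw [habs]; ring
    rw [Finset.sum_congr rfl hcg, Finset.sum_sub_distrib, hsum0, ← Finset.mul_sum]
    ring
  have hterm : ∀ i ∈ Finset.univ (α := Fin n),
      p i * max (x i - m) 0 ≤ p i * ((x i - a) * (b - m) / (b - a)) := by
    intro i _
    apply mul_le_mul_of_nonneg_left _ (hp i)
    rcases le_total (x i) m with h | h
    · rw [max_eq_right (by linarith)]
      have h1 : 0 ≤ x i - a := by linarith [(hx i).1]
      have h2 : 0 ≤ b - m := by linarith
      positivity
    · rw [max_eq_left (by linarith)]
      rw [le_div_iff₀ hba]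
      nlinarith [(hx i).2, mul_nonneg (sub_nonneg.mpr hma) (sub_nonneg.mpr (hx i).2)]
  have hgsum : ∑ i, p i * ((x i - a) * (b - m) / (b - a))
      = (m - a) * (b - m) / (b - a) := by
    have hcg : ∀ i ∈ Finset.univ (α := Fin n),
        p i * ((x i - a) * (b - m) / (b - a))
          = (p i * (x i - a)) * ((b - m) / (b - a)) := by
      intro i _; ring
    rw [Finset.sum_congr rfl hcg, ← Finset.sum_mul]
    have : ∑ i, p i * (x i - a) = m - a := by
      simp only [mul_sub]
      rw [Finset.sum_sub_distrib, ← hm, ← Finset.sum_mul, hp1, one_mul]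
    rw [this]; ring
  have hsumle := Finset.sum_le_sum hterm
  have hub : 2 * ((m - a) * (b - m) / (b - a)) ≤ (b - a) / 2 := by
    rw [show 2 * ((m - a) * (b - m) / (b - a)) = 2 * ((m - a) * (b - m)) / (b - a) by ring,
      div_le_div_iff₀ hba (by norm_num : (0:ℝ) < 2)]
    nlinarith [sq_nonneg (a + b - 2 * m)]
  have hmain : ∑ i, p i * |x i - m| ≤ (b - a) / 2 := by
    rw [hS]
    calc 2 * ∑ i, p i * max (x i - m) 0
        ≤ 2 * ((m - a) * (b - m) / (b - a)) := by rw [← hgsum]; linarith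
    _ ≤ (b - a) / 2 := hub
  refine ⟨hmain, ?_, ?_⟩
  · -- equality → half mass at a and at b
    intro heq
    have h1 : ∑ i, p i * max (x i - m) 0
        = ∑ i, p i * ((x i - a) * (b - m) / (b - a)) := by
      have : (b - a) / 2 ≤ 2 * ∑ i, p i * max (x i - m) 0 := by rw [← hS, heq]
      linarith [hub, hgsum]
    have h2 : 2 * ((m - a) * (b - m) / (b - a)) = (b - a) / 2 := by
      have := hS ▸ heq
      rw [h1, hgsum] at this
      linarith
    have hm2 : m = (a + b) / 2 := by
      have h2' : 2 * ((m - a) * (b - m)) / (b - a) = (b - a) / 2 := by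
        rw [← h2]; ring
      rw [div_eq_div_iff hba.ne' (by norm_num : (2:ℝ) ≠ 0)] at h2'
      nlinarith [sq_nonneg (a + b - 2 * m)]
    have hpt := (Finset.sum_eq_sum_iff_of_le hterm).mp h1
    have hcases : ∀ i, p i = 0 ∨ x i = a ∨ x i = b := by
      intro i
      by_cases hpi : p i = 0
      · exact Or.inl hpi
      right
      have hptm : max (x i - m) 0 = (x i - a) * (b - m) / (b - a) :=
        mul_left_cancel₀ hpi (hpt i (Finset.mem_univ i))
      have hmul : max (x i - m) 0 * (b - a) = (x i - a) * (b - m) := by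
        rw [hptm, div_mul_cancel₀ _ hba.ne']
      rcases le_total (x i) m with hc | hc
      · left
        rw [max_eq_right (by linarith)] at hmul
        have : (x i - a) * (b - m) = 0 := by linarith
        rcases mul_eq_zero.mp this.symm.symm with h | h
        · linarith
        · exfalso; rw [hm2] at h; linarith
      · right
        rw [max_eq_left (by linarith)] at hmul
        rw [hm2] at hmul
        have hxb : (x i - b) * (b - a) = 0 := by linear_combination 2 * hmul
        rcases mul_eq_zero.mp hxb with h | h
        · linarith
        · exfalso; linarith
    have hresid : ∀ i, p i
        = (if x i = a then p i else 0) + (if x i = b then p i else 0) := by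
      intro i
      rcases hcases i with h | h | h
      · simp [h]
      · simp [h, hab.ne]
      · simp [h, hab.ne']
    have hAB : (∑ i, if x i = a then p i else 0)
        + (∑ i, if x i = b then p i else 0) = 1 := by
      rw [← Finset.sum_add_distrib, ← hp1]
      exact Finset.sum_congr rfl fun i _ => (hresid i).symm
    have hmAB : m = a * (∑ i, if x i = a then p i else 0)
        + b * (∑ i, if x i = b then p i else 0) := by
      rw [hm, Finset.mul_sum, Finset.mul_sum, ← Finset.sum_add_distrib]
      refine Finset.sum_congr rfl fun i _ => ?_
      rcases hcases i with h | h | h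
      · simp [h]
      · simp [h, hab.ne, mul_comm]
      · simp [h, hab.ne', mul_comm]
    have hkey : (a - b) * ((∑ i, if x i = a then p i else 0) - 1 / 2) = 0 := by
      rw [hm2] at hmAB
      linear_combination (-1 : ℝ) * hmAB + (-b) * hAB
    have hA : (∑ i, if x i = a then p i else 0) = 1 / 2 := by
      rcases mul_eq_zero.mp hkey with h | h
      · exfalso; linarith
      · linarith
    exact ⟨hA, by linarith⟩
  · -- half mass at a and b → equality
    rintro ⟨hA, hB⟩
    have hAB : (∑ i, if x i = a then p i else 0)
        + (∑ i, if x i = b then p i else 0) = 1 := by rw [hA, hB]; norm_num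
    have hres0 : ∀ i, p i
        = (if x i = a then p i else 0) + (if x i = b then p i else 0) := by
      have hle : ∀ i ∈ Finset.univ (α := Fin n),
          (if x i = a then p i else 0) + (if x i = b then p i else 0) ≤ p i := by
        intro i _
        by_cases h : x i = a
        · rw [h, if_pos rfl, if_neg hab.ne, add_zero]
        · by_cases h' : x i = b
          · rw [h', if_neg hab.ne', if_pos rfl, zero_add]
          · rw [if_neg h, if_neg h', add_zero]; exact hp i
      have hsums : ∑ i, ((if x i = a then p i else 0) + (if x i = b then p i else 0))
          = ∑ i, p i := by rw [Finset.sum_add_distrib, hAB, hp1]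
      have := (Finset.sum_eq_sum_iff_of_le hle).mp hsums
      intro i; exact (this i (Finset.mem_univ i)).symm
    have hp0 : ∀ i, x i ≠ a → x i ≠ b → p i = 0 := by
      intro i h h'
      have := hres0 i
      simpa [h, h'] using this
    have hm2 : m = (a + b) / 2 := by
      rw [hm]
      have : ∀ i ∈ Finset.univ (α := Fin n), p i * x i
          = a * (if x i = a then p i else 0) + b * (if x i = b then p i else 0) := by
        intro i _
        by_cases h : x i = a
        · rw [h, if_pos rfl, if_neg hab.ne]; ring
        · by_cases h' : x i = b
          · rw [h', if_neg hab.ne', if_pos rfl]; ring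
          · rw [if_neg h, if_neg h', hp0 i h h']; ring
      rw [Finset.sum_congr rfl this, Finset.sum_add_distrib, ← Finset.mul_sum,
        ← Finset.mul_sum, hA, hB]
      ring
    have : ∀ i ∈ Finset.univ (α := Fin n), p i * |x i - m|
        = (b - a) / 2 * ((if x i = a then p i else 0) + (if x i = b then p i else 0)) := by
      intro i _
      by_cases h : x i = a
      · rw [hm2, h, if_pos rfl, if_neg hab.ne, add_zero,
          show a - (a + b) / 2 = -((b - a) / 2) by ring, abs_neg,
          abs_of_nonneg (by linarith)]
        ring
      · by_cases h' : x i = b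
        · rw [hm2, h', if_neg hab.ne', if_pos rfl, zero_add,
            show b - (a + b) / 2 = (b - a) / 2 by ring, abs_of_nonneg (by linarith)]
          ring
        · rw [if_neg h, if_neg h', hp0 i h h']; ring
    rw [Finset.sum_congr rfl this, ← Finset.mul_sum, Finset.sum_add_distrib, hA, hB]
    norm_num
end

section
/- Let n ≥ 1 and let p_1, …, p_n > 0 with Σ p_i = 1. Let A_1, …, A_n, Q_1, …, Q_n, c_1, …, c_n be real numbers with 0 < μ ≤ A_i ≤ L, 0 < a ≤ Q_i ≤ b, and |c_i| ≤ C for all i. Then | (Σ_{i=1}^n p_i Q_i A_i c_i)/(Σ_{i=1}^n p_i Q_i A_i) − (Σ_{i=1}^n p_i A_i c_i)/(Σ_{i=1}^n p_i A_i) | ≤ 2C · (√b − √a)/(√b + √a). -/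
open Finset

/-- One-dimensional distance between the surrogate and empirical
minimizers: with `0 < μ ≤ A_i ≤ L`, `0 < a ≤ Q_i ≤ b`, `|c_i| ≤ C`, and a positive
probability vector `p`,
`|(Σ p_i Q_i A_i c_i)/(Σ p_i Q_i A_i) − (Σ p_i A_i c_i)/(Σ p_i A_i)|
  ≤ 2C (√b − √a)/(√b + √a)`. -/
theorem stmt_12 (n : ℕ) (hn : 1 ≤ n)
    (p : Fin n → ℝ) (hp : ∀ i, 0 < p i) (hp1 : ∑ i, p i = 1)
    (A Q c : Fin n → ℝ) (μ L a b C : ℝ)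
    (hμ : 0 < μ) (hA : ∀ i, μ ≤ A i ∧ A i ≤ L)
    (ha : 0 < a) (hQ : ∀ i, a ≤ Q i ∧ Q i ≤ b)
    (hc : ∀ i, |c i| ≤ C) :
    |(∑ i, p i * (Q i * A i * c i)) / (∑ i, p i * (Q i * A i)) -
        (∑ i, p i * (A i * c i)) / (∑ i, p i * A i)| ≤
      2 * C * (Real.sqrt b - Real.sqrt a) / (Real.sqrt b + Real.sqrt a) := by
  have i0 : Fin n := ⟨0, hn⟩
  have hApos : ∀ i, 0 < A i := fun i => lt_of_lt_of_le hμ (hA i).1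
  have hQpos : ∀ i, 0 < Q i := fun i => lt_of_lt_of_le ha (hQ i).1
  have hC : 0 ≤ C := le_trans (abs_nonneg _) (hc i0)
  have hab : a ≤ b := le_trans (hQ i0).1 (hQ i0).2
  have hb : 0 < b := lt_of_lt_of_le ha hab
  set S := ∑ i, p i * A i with hSdef
  set T := ∑ i, p i * (Q i * A i) with hTdef
  have hSpos : 0 < S :=
    Finset.sum_pos (fun i _ => mul_pos (hp i) (hApos i)) ⟨i0, Finset.mem_univ _⟩
  have hTpos : 0 < T :=
    Finset.sum_pos (fun i _ => mul_pos (hp i) (mul_pos (hQpos i) (hApos i)))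
      ⟨i0, Finset.mem_univ _⟩
  have haS : a * S ≤ T := by
    rw [Finset.mul_sum]
    refine Finset.sum_le_sum fun i _ => ?_
    nlinarith [mul_nonneg (sub_nonneg.2 (hQ i).1) (mul_pos (hp i) (hApos i)).le]
  have hbT : T ≤ b * S := by
    rw [Finset.mul_sum]
    refine Finset.sum_le_sum fun i _ => ?_
    nlinarith [mul_nonneg (sub_nonneg.2 (hQ i).2) (mul_pos (hp i) (hApos i)).le]
  set sa := Real.sqrt a with hsadef
  set sb := Real.sqrt b with hsbdef
  have hsapos : 0 < sa := Real.sqrt_pos.2 ha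
  have hsbpos : 0 < sb := Real.sqrt_pos.2 hb
  have hsa2 : sa ^ 2 = a := Real.sq_sqrt ha.le
  have hsb2 : sb ^ 2 = b := Real.sq_sqrt hb.le
  have hsab : sa ≤ sb := Real.sqrt_le_sqrt hab
  clear_value S T
  by_cases hba : a < b
  · -- main case
    set m := T / S with hmdef
    have hm : T = m * S := (div_mul_cancel₀ T (ne_of_gt hSpos)).symm
    have ham : a ≤ m := (le_div_iff₀ hSpos).2 (by linarith)
    have hmb : m ≤ b := (div_le_iff₀ hSpos).2 (by linarith)
    have hmpos : 0 < m := lt_of_lt_of_le ha ham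
    clear_value m
    have hbapos : (0:ℝ) < b - a := by linarith
    have hrw : (∑ i, p i * (Q i * A i * c i)) / T - (∑ i, p i * (A i * c i)) / S
        = (∑ i, p i * A i * c i * (Q i - m)) / T := by
      have hexp : ∑ i, p i * A i * c i * (Q i - m)
          = (∑ i, p i * (Q i * A i * c i)) - m * (∑ i, p i * (A i * c i)) := by
        rw [Finset.mul_sum, ← Finset.sum_sub_distrib]
        exact Finset.sum_congr rfl fun i _ => by ring
      rw [hexp, sub_div]
      congr 1
      rw [hm, mul_div_mul_left _ _ (ne_of_gt hmpos)]
    rw [hrw, abs_div, abs_of_pos hTpos]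
    have hterm : ∀ i ∈ Finset.univ (α := Fin n),
        |p i * A i * c i * (Q i - m)| ≤
          C * (p i * A i * ((Q i - a) * (b - m) + (b - Q i) * (m - a))) / (b - a) := by
      intro i _
      have h1 : |p i * A i * c i * (Q i - m)| = p i * A i * |c i| * |Q i - m| := by
        rw [abs_mul, abs_mul, abs_mul, abs_of_pos (hp i), abs_of_pos (hApos i)]
      rw [h1]
      have hchord : |Q i - m| ≤ ((Q i - a) * (b - m) + (b - Q i) * (m - a)) / (b - a) := by
        rw [le_div_iff₀ hbapos]
        rcases abs_cases (Q i - m) with ⟨he, _⟩ | ⟨he, _⟩ <;> rw [he] <;>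
          nlinarith [(hQ i).1, (hQ i).2]
      calc p i * A i * |c i| * |Q i - m|
          ≤ p i * A i * C * (((Q i - a) * (b - m) + (b - Q i) * (m - a)) / (b - a)) := by
            apply mul_le_mul
            · exact mul_le_mul_of_nonneg_left (hc i) (mul_pos (hp i) (hApos i)).le
            · exact hchord
            · exact abs_nonneg _
            · exact mul_nonneg (mul_pos (hp i) (hApos i)).le hC
        _ = C * (p i * A i * ((Q i - a) * (b - m) + (b - Q i) * (m - a))) / (b - a) := by
            ring
    have h1 : |∑ i, p i * A i * c i * (Q i - m)| ≤
        ∑ i, C * (p i * A i * ((Q i - a) * (b - m) + (b - Q i) * (m - a))) / (b - a) :=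
      (Finset.abs_sum_le_sum_abs _ _).trans (Finset.sum_le_sum hterm)
    have hsumeq : ∑ i, C * (p i * A i * ((Q i - a) * (b - m) + (b - Q i) * (m - a))) / (b - a)
        = C * ((b - m) * (T - a * S) + (m - a) * (b * S - T)) / (b - a) := by
      have hpt : ∀ i, C * (p i * A i * ((Q i - a) * (b - m) + (b - Q i) * (m - a))) / (b - a)
          = ((b - m) * (p i * (Q i * A i)) - ((b - m) * a) * (p i * A i)
              + (((m - a) * b) * (p i * A i) - (m - a) * (p i * (Q i * A i)))) * (C / (b - a)) :=
        fun i => by ring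
      simp only [hpt]
      rw [← Finset.sum_mul, Finset.sum_add_distrib, Finset.sum_sub_distrib,
        Finset.sum_sub_distrib, ← Finset.mul_sum, ← Finset.mul_sum, ← Finset.mul_sum,
        ← Finset.mul_sum, ← hSdef, ← hTdef]
      ring
    have hfinal : C * ((b - m) * (T - a * S) + (m - a) * (b * S - T)) / (b - a) / T
        ≤ 2 * C * (sb - sa) / (sb + sa) := by
      rw [hm, div_div, div_le_div_iff₀ (by positivity) (by positivity)]
      have hkey : 0 ≤ C * S * (sa + sb) * (m - sa * sb) ^ 2 :=
        mul_nonneg (mul_nonneg (mul_nonneg hC hSpos.le) (by positivity)) (sq_nonneg _)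
      have h2 : 2 * C * (sb - sa) * ((b - a) * (m * S))
          - C * ((b - m) * (m * S - a * S) + (m - a) * (b * S - m * S)) * (sb + sa)
          = 2 * (C * S * (sa + sb) * (m - sa * sb) ^ 2) := by
        rw [← hsa2, ← hsb2]; ring
      linarith [hkey, h2]
    calc |∑ i, p i * A i * c i * (Q i - m)| / T
        ≤ (C * ((b - m) * (T - a * S) + (m - a) * (b * S - T)) / (b - a)) / T := by
          rw [← hsumeq]; gcongr
      _ ≤ 2 * C * (sb - sa) / (sb + sa) := hfinal
  · -- degenerate case a = b
    have hba' : b = a := le_antisymm (not_lt.1 hba) hab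
    have hQa : ∀ i, Q i = a := fun i =>
      le_antisymm ((hQ i).2.trans_eq hba') (hQ i).1
    have h1 : (∑ i, p i * (Q i * A i * c i)) = a * ∑ i, p i * (A i * c i) := by
      rw [Finset.mul_sum]
      exact Finset.sum_congr rfl fun i _ => by rw [hQa]; ring
    have h2 : T = a * S := by
      rw [hTdef, hSdef, Finset.mul_sum]
      exact Finset.sum_congr rfl fun i _ => by rw [hQa]; ring
    have hsba : sb = sa := by rw [hsbdef, hsadef, hba']
    rw [h1, h2, mul_div_mul_left _ _ (ne_of_gt ha), sub_self, abs_zero, hsba, sub_self,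
      mul_zero, zero_div]
end

section
/- For i = 1, …, n, let A_i be real symmetric d×d matrices with μI ⪯ A_i ⪯ LI for some 0 < μ ≤ L, let c_i ∈ ℝ^d, and let p_1, …, p_n > 0 with Σ p_i = 1. Let α ≥ 0, 0 ≤ γ < 1/(L + α), and θ_1,…,θ_K nonnegative reals not all zero, and set Q_i := Q(A_i; α, γ, θ). Then Σ_i p_i Q_i A_i is symmetric positive definite, and the surrogate loss f̃(x) := Σ_i p_i (1/2)⟨x − c_i, Q_i A_i (x − c_i)⟩ has the unique global minimizer x*(α, γ, θ) = (Σ_i p_i Q_i A_i)^{−1} (Σ_i p_i Q_i A_i c_i). -/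
/-!
`Q(A) A` is the continuous functional calculus of `A` applied to `t ↦ q(t) t`, where
`q(t) = Σ_k θ_k (1 - γ(t + α))^(k-1)`. On the spectrum of `A`, which lies in `[μ, L]`, the base
`1 - γ(t + α)` is positive because `γ(L + α) < 1`, so `q(t) t > 0` and each `Q_i A_i` is positive
definite, hence so is `M = Σ_i p_i Q_i A_i`. Expanding around `x* = M⁻¹ b` with
`b = Σ_i p_i Q_i A_i c_i`, the cross terms cancel because `M x* = b`, which leaves
`f̃(x) = f̃(x*) + ½ ⟨x - x*, M (x - x*)⟩`.
-/

open Matrix Finset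

open scoped MatrixOrder

lemma Matrix.IsHermitian.spectrum_subset_Icc {m : Type*} [Fintype m] [DecidableEq m]
    {A : Matrix m m ℝ} (hA : A.IsHermitian) {μ L : ℝ}
    (hlow : (A - μ • 1).PosSemidef) (hup : (L • 1 - A).PosSemidef) :
    spectrum ℝ A ⊆ Set.Icc μ L := fun t ht =>
  ⟨(algebraMap_le_iff_le_spectrum (a := A) hA.isSelfAdjoint).mp
      (by rwa [Algebra.algebraMap_eq_smul_one, Matrix.le_iff]) t ht,
    (le_algebraMap_iff_spectrum_le (a := A) hA.isSelfAdjoint).mp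
      (by rwa [Algebra.algebraMap_eq_smul_one, Matrix.le_iff]) t ht⟩

noncomputable def distortionFactor (K : ℕ) (α γ : ℝ) (θ : ℕ → ℝ) (t : ℝ) : ℝ :=
  ∑ k ∈ Icc 1 K, θ k * (1 - γ * (t + α)) ^ (k - 1)

lemma distortionFactor_pos {K : ℕ} {α γ t : ℝ} {θ : ℕ → ℝ} (ht : γ * (t + α) < 1)
    (hθ : ∀ k, 0 ≤ θ k) (hθne : ∃ k ∈ Icc 1 K, θ k ≠ 0) :
    0 < distortionFactor K α γ θ t := by
  have hbase : 0 < 1 - γ * (t + α) := sub_pos.mpr ht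
  obtain ⟨k, hk, hθk⟩ := hθne
  exact sum_pos' (fun j _ => mul_nonneg (hθ j) (pow_pos hbase _).le)
    ⟨k, hk, mul_pos ((hθ k).lt_of_ne' hθk) (pow_pos hbase _)⟩

lemma distortion_mul_eq_cfc {d : ℕ} (K : ℕ) {A : Matrix (Fin d) (Fin d) ℝ}
    (hA : A.IsHermitian) (α γ : ℝ) (θ : ℕ → ℝ) :
    distortion K A α γ θ * A = cfc (fun t => distortionFactor K α γ θ t * t) A := by
  have hA' := hA.isSelfAdjoint
  have hbase : 1 - γ • (A + α • 1) = cfc (fun t => 1 - γ * (t + α)) A := by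
    rw [cfc_sub (fun _ => 1) (fun t => γ * (t + α)) A, cfc_const_one ℝ A,
      cfc_const_mul γ (· + α) A, cfc_add_const α (fun t => t) A, cfc_id' ℝ A,
      Algebra.algebraMap_eq_smul_one]
  have hQ : distortion K A α γ θ = cfc (distortionFactor K α γ θ) A := by
    unfold distortionFactor
    rw [← sum_fn, cfc_sum _ _ _ fun k _ => by fun_prop]
    refine sum_congr rfl fun k _ => ?_
    rw [hbase, cfc_const_mul (θ k) _ A, cfc_pow _ _ A]
  rw [hQ, cfc_mul _ _ A (by unfold distortionFactor; fun_prop), cfc_id' ℝ A]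

lemma posDef_distortion_mul {d K : ℕ} {A : Matrix (Fin d) (Fin d) ℝ} (hA : A.IsHermitian)
    {μ L α γ : ℝ} (hμ : 0 < μ) (hlow : (A - μ • 1).PosSemidef) (hup : (L • 1 - A).PosSemidef)
    (hγ0 : 0 ≤ γ) (hγ : γ * (L + α) < 1)
    {θ : ℕ → ℝ} (hθ : ∀ k, 0 ≤ θ k) (hθne : ∃ k ∈ Icc 1 K, θ k ≠ 0) :
    (distortion K A α γ θ * A).PosDef := by
  have hA' := hA.isSelfAdjoint
  rw [distortion_mul_eq_cfc K hA, ← isStrictlyPositive_iff_posDef,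
    cfc_isStrictlyPositive_iff _ A (by unfold distortionFactor; fun_prop)]
  intro t ht
  obtain ⟨hμt, htL⟩ := hA.spectrum_subset_Icc hlow hup ht
  have hγt : γ * (t + α) < 1 :=
    (mul_le_mul_of_nonneg_left (by linarith) hγ0).trans_lt hγ
  exact mul_pos (distortionFactor_pos hγt hθ hθne) (hμ.trans_le hμt)

section Quadratic

variable {m ι : Type*} [Fintype m] [Fintype ι]

lemma Matrix.IsSymm.add_dotProduct_mulVec_add {T : Matrix m m ℝ} (hT : T.IsSymm)
    (u w : m → ℝ) :
    (u + w) ⬝ᵥ T *ᵥ (u + w) = u ⬝ᵥ T *ᵥ u + 2 * (u ⬝ᵥ T *ᵥ w) + w ⬝ᵥ T *ᵥ w := by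
  have hswap : w ⬝ᵥ T *ᵥ u = u ⬝ᵥ T *ᵥ w := by
    rw [dotProduct_mulVec, ← mulVec_transpose, hT.eq, dotProduct_comm]
  rw [add_dotProduct, mulVec_add, dotProduct_add, dotProduct_add, hswap]
  ring

/-- Taylor expansion of `x ↦ Σ p_i ½ ⟨x - c_i, T_i (x - c_i)⟩` around its stationary point `y`. -/
lemma sum_half_quadratic_eq_of_mulVec_eq (T : ι → Matrix m m ℝ) (hT : ∀ i, (T i).IsSymm)
    (p : ι → ℝ) (c : ι → m → ℝ) {y : m → ℝ}
    (hy : (∑ i, p i • T i) *ᵥ y = ∑ i, p i • T i *ᵥ c i) (x : m → ℝ) :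
    ∑ i, p i * (1 / 2 * ((x - c i) ⬝ᵥ T i *ᵥ (x - c i))) =
      ∑ i, p i * (1 / 2 * ((y - c i) ⬝ᵥ T i *ᵥ (y - c i))) +
        1 / 2 * ((x - y) ⬝ᵥ (∑ i, p i • T i) *ᵥ (x - y)) := by
  have hquad : (x - y) ⬝ᵥ (∑ i, p i • T i) *ᵥ (x - y) =
      ∑ i, p i * ((x - y) ⬝ᵥ T i *ᵥ (x - y)) := by
    simp only [sum_mulVec, dotProduct_sum, smul_mulVec, dotProduct_smul, smul_eq_mul]
  have hcross : ∑ i, p i * ((x - y) ⬝ᵥ T i *ᵥ (y - c i)) = 0 := by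
    have hres : ∑ i, p i • T i *ᵥ (y - c i) = 0 := by
      simp only [mulVec_sub, smul_sub, sum_sub_distrib, ← hy, sum_mulVec, smul_mulVec, sub_self]
    calc ∑ i, p i * ((x - y) ⬝ᵥ T i *ᵥ (y - c i))
        = (x - y) ⬝ᵥ ∑ i, p i • T i *ᵥ (y - c i) := by
          simp only [dotProduct_sum, dotProduct_smul, smul_eq_mul]
      _ = 0 := by rw [hres, dotProduct_zero]
  calc ∑ i, p i * (1 / 2 * ((x - c i) ⬝ᵥ T i *ᵥ (x - c i)))
      = ∑ i, (p i * (1 / 2 * ((y - c i) ⬝ᵥ T i *ᵥ (y - c i))) +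
          1 / 2 * (p i * ((x - y) ⬝ᵥ T i *ᵥ (x - y))) +
          p i * ((x - y) ⬝ᵥ T i *ᵥ (y - c i))) := by
        refine sum_congr rfl fun i _ => ?_
        rw [← sub_add_sub_cancel x y (c i), (hT i).add_dotProduct_mulVec_add]
        ring
    _ = _ := by rw [sum_add_distrib, sum_add_distrib, hcross, hquad, mul_sum, add_zero]

end Quadratic

theorem stmt_16_general (d n K : ℕ) (A : Fin n → Matrix (Fin d) (Fin d) ℝ)
    (hA : ∀ i, (A i).IsSymm)
    (μ L : ℝ) (hμ : 0 < μ)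
    (hAlow : ∀ i, (A i - μ • (1 : Matrix (Fin d) (Fin d) ℝ)).PosSemidef)
    (hAup : ∀ i, (L • (1 : Matrix (Fin d) (Fin d) ℝ) - A i).PosSemidef)
    (c : Fin n → Fin d → ℝ)
    (p : Fin n → ℝ) (hp : ∀ i, 0 < p i) (hp1 : ∑ i, p i = 1)
    (α γ : ℝ) (hγ0 : 0 ≤ γ) (hγ : γ < 1 / (L + α))
    (θ : ℕ → ℝ) (hθ : ∀ k, 0 ≤ θ k) (hθne : ∃ k ∈ Finset.Icc 1 K, θ k ≠ 0)
    (Q : Fin n → Matrix (Fin d) (Fin d) ℝ) (hQ : ∀ i, Q i = distortion K (A i) α γ θ)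
    (ftil : (Fin d → ℝ) → ℝ)
    (hf : ∀ x, ftil x = ∑ i, p i *
      ((1 / 2) * ((x - c i) ⬝ᵥ (Q i * A i).mulVec (x - c i))))
    (xstar : Fin d → ℝ)
    (hxstar : xstar =
      (∑ i, p i • (Q i * A i))⁻¹.mulVec (∑ i, p i • (Q i * A i).mulVec (c i))) :
    (∑ i, p i • (Q i * A i)).PosDef ∧
    (∀ x, ftil xstar ≤ ftil x) ∧
    (∀ x, ftil x = ftil xstar → x = xstar) := by
  have hLα : 0 < L + α := one_div_pos.mp (hγ0.trans_lt hγ)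
  have hQA : ∀ i, (Q i * A i).PosDef := fun i => hQ i ▸
    posDef_distortion_mul (isHermitian_iff_isSymm.mpr (hA i)) hμ (hAlow i) (hAup i) hγ0
      ((lt_div_iff₀ hLα).mp hγ) hθ hθne
  set M := ∑ i, p i • (Q i * A i)
  have hM : M.PosDef :=
    posDef_sum (nonempty_of_sum_ne_zero (hp1 ▸ one_ne_zero)) fun i _ => (hQA i).smul (hp i)
  have hMx : M *ᵥ xstar = ∑ i, p i • (Q i * A i) *ᵥ c i := by
    rw [hxstar, mulVec_mulVec, mul_nonsing_inv _ (isUnit_iff_isUnit_det M |>.mp hM.isUnit),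
      one_mulVec]
  have hexpand : ∀ x, ftil x = ftil xstar + 1 / 2 * ((x - xstar) ⬝ᵥ M *ᵥ (x - xstar)) :=
    fun x => by
      rw [hf, hf, sum_half_quadratic_eq_of_mulVec_eq _
        (fun i => isHermitian_iff_isSymm.mp (hQA i).isHermitian) p c hMx x]
  refine ⟨hM, fun x => ?_, fun x hx => ?_⟩
  · have := hM.posSemidef.dotProduct_mulVec_nonneg (x - xstar)
    rw [star_trivial] at this
    linarith [hexpand x]
  · by_contra hne
    have := hM.dotProduct_mulVec_pos (sub_ne_zero.mpr hne)
    rw [star_trivial] at this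
    linarith [hexpand x]

/-- The matrix `Σ_i p_i Q_i A_i` is symmetric positive definite, and the
surrogate loss `f̃(x) = Σ_i p_i (1/2)⟨x − c_i, Q_i A_i (x − c_i)⟩` has the unique global
minimizer `x* = (Σ_i p_i Q_i A_i)⁻¹ (Σ_i p_i Q_i A_i c_i)`. -/
theorem stmt_16 (d n K : ℕ) (A : Fin n → Matrix (Fin d) (Fin d) ℝ)
    (hA : ∀ i, (A i).IsSymm)
    (μ L : ℝ) (hμ : 0 < μ) (hμL : μ ≤ L)
    (hAlow : ∀ i, (A i - μ • (1 : Matrix (Fin d) (Fin d) ℝ)).PosSemidef)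
    (hAup : ∀ i, (L • (1 : Matrix (Fin d) (Fin d) ℝ) - A i).PosSemidef)
    (c : Fin n → Fin d → ℝ)
    (p : Fin n → ℝ) (hp : ∀ i, 0 < p i) (hp1 : ∑ i, p i = 1)
    (α γ : ℝ) (hα : 0 ≤ α) (hγ0 : 0 ≤ γ) (hγ : γ < 1 / (L + α))
    (θ : ℕ → ℝ) (hθ : ∀ k, 0 ≤ θ k) (hθne : ∃ k ∈ Finset.Icc 1 K, θ k ≠ 0)
    (Q : Fin n → Matrix (Fin d) (Fin d) ℝ) (hQ : ∀ i, Q i = distortion K (A i) α γ θ)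
    (ftil : (Fin d → ℝ) → ℝ)
    (hf : ∀ x, ftil x = ∑ i, p i *
      ((1 / 2) * ((x - c i) ⬝ᵥ (Q i * A i).mulVec (x - c i))))
    (xstar : Fin d → ℝ)
    (hxstar : xstar =
      (∑ i, p i • (Q i * A i))⁻¹.mulVec (∑ i, p i • (Q i * A i).mulVec (c i))) :
    (∑ i, p i • (Q i * A i)).PosDef ∧
    (∀ x, ftil xstar ≤ ftil x) ∧
    (∀ x, ftil x = ftil xstar → x = xstar) :=
  stmt_16_general d n K A hA μ L hμ hAlow hAup c p hp hp1 α γ hγ0 hγ θ hθ hθne Q hQ ftil hf xstar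
    hxstar
end
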